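/- Let w : ℕ → [0,∞) with Σ_n w n = ∞ and w n → 0, let 𝓕 be a hereditary family of finite subsets of ℕ, and let ε > 0. If for every finite E ⊆ ℕ there is F ∈ 𝓕 with F ⊆ E and Σ_{i∈F} w i ≥ ε · Σ_{i∈E} w i, then 𝓕 is not compact: the set of characteristic functions of members of 𝓕 is not a compact subset of the Cantor space ℕ → Bool. -/

import Mathlib

open Filter Topology

open Classical in
/-- The characteristic function of a set of naturals, as an element of the Cantor space. -/
noncomputable def chi (A : Set ℕ) : ℕ → Bool := fun n => decide (n ∈ A)

/-- In any tail there is a finite set of large weight, if `w` is not summable. -/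
lemma exists_tail_finset (w : ℕ → ℝ) (hw : ∀ n, 0 ≤ w n) (hdiv : ¬ Summable w)
    (N : ℕ) (C : ℝ) : ∃ E : Finset ℕ, (∀ i ∈ E, N < i) ∧ C ≤ ∑ i ∈ E, w i := by
  by_contra h
  push_neg at h
  apply hdiv
  apply summable_of_sum_range_le (c := (∑ i ∈ Finset.range (N + 1), w i) + C) hw
  intro n
  classical
  have hsplit := Finset.sum_filter_add_sum_filter_not (Finset.range n) (fun i => i ≤ N) w
  have h1 : ∑ i ∈ (Finset.range n).filter (fun i => i ≤ N), w i
      ≤ ∑ i ∈ Finset.range (N + 1), w i := by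
    apply Finset.sum_le_sum_of_subset_of_nonneg
    · intro x hx
      simp only [Finset.mem_filter, Finset.mem_range] at hx ⊢
      omega
    · intro i _ _; exact hw i
  have h2 : ∑ i ∈ (Finset.range n).filter (fun i => ¬ i ≤ N), w i ≤ C := by
    refine le_of_lt (h _ ?_)
    intro i hi
    simp only [Finset.mem_filter, not_le] at hi
    exact hi.2
  linarith

/-- Trim a finite set of small weights down to weight in `[t, 2t]`. -/
lemma trim_finset (w : ℕ → ℝ) (hw : ∀ n, 0 ≤ w n) (t : ℝ) (ht : 0 < t) :
    ∀ E : Finset ℕ, (∀ i ∈ E, w i ≤ t) → t ≤ ∑ i ∈ E, w i →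
      ∃ B ⊆ E, t ≤ ∑ i ∈ B, w i ∧ ∑ i ∈ B, w i ≤ 2 * t := by
  classical
  intro E
  induction E using Finset.strongInduction with
  | _ E ih =>
    intro hle hsum
    by_cases h2 : ∑ i ∈ E, w i ≤ 2 * t
    · exact ⟨E, Finset.Subset.refl E, hsum, h2⟩
    · have hne : E.Nonempty := by
        rcases E.eq_empty_or_nonempty with rfl | hne
        · simp only [Finset.sum_empty] at hsum; linarith
        · exact hne
      obtain ⟨i, hi⟩ := hne
      have herase : ∑ x ∈ E.erase i, w x + w i = ∑ x ∈ E, w x :=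
        Finset.sum_erase_add E w hi
      have ht' : t ≤ ∑ x ∈ E.erase i, w x := by
        have := hle i hi
        linarith
      obtain ⟨B, hBsub, hB1, hB2⟩ := ih (E.erase i) (Finset.erase_ssubset hi)
        (fun j hj => hle j (Finset.mem_of_mem_erase hj)) ht'
      exact ⟨B, hBsub.trans (Finset.erase_subset i E), hB1, hB2⟩

/-- In any tail where the weights are `≤ t`, there's a finite set of weight in `[t, 2t]`. -/
lemma exists_block (w : ℕ → ℝ) (hw : ∀ n, 0 ≤ w n) (hdiv : ¬ Summable w)
    (t : ℝ) (ht : 0 < t) (N : ℕ) (htail : ∀ i, N < i → w i ≤ t) :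
    ∃ B : Finset ℕ, (∀ i ∈ B, N < i) ∧ t ≤ ∑ i ∈ B, w i ∧ ∑ i ∈ B, w i ≤ 2 * t := by
  obtain ⟨E, hE1, hE2⟩ := exists_tail_finset w hw hdiv N t
  obtain ⟨B, hBsub, hB1, hB2⟩ := trim_finset w hw t ht E (fun i hi => htail i (hE1 i hi)) hE2
  exact ⟨B, fun i hi => hE1 i (hBsub hi), hB1, hB2⟩

theorem stmt10 (w : ℕ → ℝ) (hwnonneg : ∀ n, 0 ≤ w n)
    (hwdiv : ¬ Summable w) (hw0 : Tendsto w atTop (𝓝 0))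
    (𝓕 : Set (Set ℕ)) (hfin : ∀ F ∈ 𝓕, F.Finite)
    (hher : ∀ F ∈ 𝓕, ∀ G ⊆ F, G ∈ 𝓕)
    (ε : ℝ) (hε : 0 < ε)
    (hfill : ∀ E : Set ℕ, E.Finite →
      ∃ F ∈ 𝓕, F ⊆ E ∧ ε * ∑' i : E, w i ≤ ∑' i : F, w i) :
    ¬ IsCompact (chi '' 𝓕) := by
  classical
  intro hcomp
  have hσ0 : ∀ E : Finset ℕ, 0 ≤ ∑ i ∈ E, w i :=
    fun E => Finset.sum_nonneg fun i _ => hwnonneg i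
  -- chi is injective
  have hchi_inj : Function.Injective chi := by
    intro A B h
    ext n
    have := congrFun h n
    simpa [chi, decide_eq_decide] using this
  -- the empty set belongs to 𝓕
  have hempty : (∅ : Set ℕ) ∈ 𝓕 := by
    obtain ⟨F, hF, hsub, -⟩ := hfill ∅ Set.finite_empty
    rwa [Set.subset_empty_iff.mp hsub] at hF
  -- no infinite strictly increasing chain in 𝓕
  have hnochain : ∀ f : ℕ → Set ℕ, (∀ n, f n ∈ 𝓕) → (∀ n, f n ⊂ f (n + 1)) → False := by
    intro f hmem hlt
    have hmono : StrictMono f := strictMono_nat_of_lt_succ hlt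
    set A : Set ℕ := ⋃ n, f n with hA
    have hsubA : ∀ n, f n ⊆ A := fun n => Set.subset_iUnion f n
    have htend : Tendsto (fun n => chi (f n)) atTop (𝓝 (chi A)) := by
      rw [tendsto_pi_nhds]
      intro i
      by_cases hiA : i ∈ A
      · obtain ⟨n₀, hn₀⟩ : ∃ n, i ∈ f n := Set.mem_iUnion.mp hiA
        have hev : (fun n => chi (f n) i) =ᶠ[atTop] (fun _ => chi A i) := by
          filter_upwards [eventually_ge_atTop n₀] with n hn
          have h1 : i ∈ f n := hmono.monotone hn hn₀
          simp [chi, h1, hiA]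
        exact (tendsto_const_nhds).congr' hev.symm
      · have heq : (fun n => chi (f n) i) = fun _ => chi A i := by
          funext n
          have h1 : i ∉ f n := fun h => hiA (hsubA n h)
          simp [chi, h1, hiA]
        rw [heq]
        exact tendsto_const_nhds
    have hmemA : chi A ∈ chi '' 𝓕 := by
      have hclosed : IsClosed (chi '' 𝓕) := hcomp.isClosed
      have hcl := mem_closure_of_tendsto htend
        (Eventually.of_forall fun n => Set.mem_image_of_mem chi (hmem n))
      rwa [hclosed.closure_eq] at hcl
    obtain ⟨S, hS, hSA⟩ := hmemA
    have hAF : A ∈ 𝓕 := by rwa [hchi_inj hSA] at hS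
    have hAfin : A.Finite := hfin A hAF
    have hrange : Set.range f ⊆ {B | B ⊆ A} := by
      rintro _ ⟨n, rfl⟩
      exact hsubA n
    exact (Set.infinite_range_of_injective hmono.injective)
      (hAfin.finite_subsets.subset hrange)
  -- well-founded extension relation
  set r : Set ℕ → Set ℕ → Prop := fun B A => (A ∈ 𝓕 ∧ B ∈ 𝓕) ∧ A ⊂ B with hrdef
  haveI : IsIrrefl (Set ℕ) r := ⟨fun a h => ssubset_irrefl a h.2⟩
  haveI : IsTrans (Set ℕ) r :=
    ⟨fun _ _ _ hab hbc => ⟨⟨hbc.1.1, hab.1.2⟩, hbc.2.trans hab.2⟩⟩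
  haveI : IsStrictOrder (Set ℕ) r := {}
  have hwf : WellFounded r := by
    rw [RelEmbedding.wellFounded_iff_isEmpty]
    constructor
    intro g
    have hstep : ∀ n : ℕ, r (g (n + 1)) (g n) := fun n => g.map_rel_iff.mpr (Nat.lt_succ_self n)
    exact hnochain (fun n => g n) (fun n => (hstep n).1.1) (fun n => (hstep n).2)
  set rk : Set ℕ → Ordinal := fun a => (hwf.apply a).rank with hrkdef
  -- THE CORE LEMMA, by ordinal induction on the maximal rank of a finite family of prefixes
  have CORE : ∀ o : Ordinal, ∀ 𝒬 : Finset (Set ℕ), (∀ Q ∈ 𝒬, Q ∈ 𝓕) →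
      𝒬.sup rk ≤ o → ∀ δ : ℝ, 0 < δ → ∀ s : ℝ, 0 < s → ∀ N : ℕ,
      ∃ E : Finset ℕ, (∀ i ∈ E, N < i) ∧ s ≤ ∑ i ∈ E, w i ∧ (∑ i ∈ E, w i) ≤ 2 * s ∧
        ∀ F : Finset ℕ, F ⊆ E → (∃ Q ∈ 𝒬, Q ∪ ↑F ∈ 𝓕) →
          (∑ i ∈ F, w i) ≤ δ * ∑ i ∈ E, w i := by
    intro o
    induction o using Ordinal.induction with
    | _ o IH =>
    intro 𝒬 h𝒬 hμ δ hδ s hs N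
    set rr : ℕ := ⌈(4 : ℝ) / δ⌉₊ with hrrdef
    have hr4 : (4 : ℝ) / δ ≤ rr := Nat.le_ceil _
    have hr'pos : 0 < rr := Nat.ceil_pos.mpr (by positivity)
    have hrR : (0 : ℝ) < rr := by exact_mod_cast hr'pos
    set s' : ℝ := s / rr with hs'def
    have hs' : 0 < s' := div_pos hs hrR
    have hr's : (rr : ℝ) * s' = s := by
      rw [hs'def]; field_simp
    -- tail bound on w
    obtain ⟨N₁, hN₁⟩ : ∃ N₁ : ℕ, ∀ i ≥ N₁, w i ≤ s' := by
      have hev : ∀ᶠ i in atTop, w i ≤ s' := hw0.eventually (eventually_le_nhds hs')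
      exact eventually_atTop.mp hev
    -- bound on elements of members of 𝒬
    obtain ⟨M₀, hM₀⟩ : ∃ M₀ : ℕ, ∀ Q ∈ 𝒬, ∀ x ∈ Q, x ≤ M₀ := by
      have hQfin : (⋃ Q ∈ (↑𝒬 : Set (Set ℕ)), Q).Finite :=
        Set.Finite.biUnion 𝒬.finite_toSet (fun Q hQ => hfin Q (h𝒬 Q hQ))
      obtain ⟨M₀, hM₀⟩ := hQfin.bddAbove
      exact ⟨M₀, fun Q hQ x hx => hM₀ (Set.mem_biUnion (by exact_mod_cast hQ) hx)⟩
    set N₀ : ℕ := max N (max N₁ M₀) with hN₀def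
    have hN₀N : N ≤ N₀ := le_max_left _ _
    have hN₀N₁ : N₁ ≤ N₀ := le_trans (le_max_left _ _) (le_max_right _ _)
    have hN₀M₀ : M₀ ≤ N₀ := le_trans (le_max_right _ _) (le_max_right _ _)
    -- the blocks construction
    have blocks : ∀ k : ℕ, ∃ E : Finset ℕ, (∀ i ∈ E, N₀ < i) ∧
        (k : ℝ) * s' ≤ ∑ i ∈ E, w i ∧ ∑ i ∈ E, w i ≤ 2 * k * s' ∧
        ∀ F : Finset ℕ, F ⊆ E → F.Nonempty → (∃ Q ∈ 𝒬, Q ∪ ↑F ∈ 𝓕) →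
          (∑ i ∈ F, w i) ≤ 2 * s' + (δ / 4) * ∑ i ∈ E, w i := by
      intro k
      induction k with
      | zero =>
        refine ⟨∅, by simp, by simp, by simp, ?_⟩
        intro F hF hne _
        exact absurd (Finset.subset_empty.mp hF) hne.ne_empty
      | succ k ih =>
        obtain ⟨E, hEgt, hElo, hEhi, hEQ⟩ := ih
        set M' : ℕ := max N₀ (E.sup id) with hM'def
        have hN₀M' : N₀ ≤ M' := le_max_left _ _
        set 𝒬' : Finset (Set ℕ) :=
          ((E ×ˢ 𝒬).filter (fun p => insert p.1 p.2 ∈ 𝓕)).image (fun p => insert p.1 p.2)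
          with h𝒬'def
        have h𝒬'mem : ∀ Q' ∈ 𝒬', Q' ∈ 𝓕 := by
          intro Q' hQ'
          simp only [h𝒬'def, Finset.mem_image, Finset.mem_filter] at hQ'
          obtain ⟨p, ⟨-, hp2⟩, rfl⟩ := hQ'
          exact hp2
        have h𝒬'ins : ∀ m ∈ E, ∀ Q ∈ 𝒬, insert m Q ∈ 𝓕 → insert m Q ∈ 𝒬' := by
          intro m hm Q hQ hins
          simp only [h𝒬'def, Finset.mem_image, Finset.mem_filter, Finset.mem_product]
          exact ⟨(m, Q), ⟨⟨hm, hQ⟩, hins⟩, rfl⟩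
        -- obtain the next block
        have hblock : ∃ B : Finset ℕ, (∀ i ∈ B, M' < i) ∧ s' ≤ ∑ i ∈ B, w i ∧
            (∑ i ∈ B, w i) ≤ 2 * s' ∧
            ∀ G : Finset ℕ, G ⊆ B → (∃ Q' ∈ 𝒬', Q' ∪ ↑G ∈ 𝓕) →
              (∑ i ∈ G, w i) ≤ (δ / 4) * ∑ i ∈ B, w i := by
          rcases 𝒬'.eq_empty_or_nonempty with hQ'e | hQ'ne
          · obtain ⟨B, hB1, hB2, hB3⟩ := exists_block w hwnonneg hwdiv s' hs' M'
              (fun i hi => hN₁ i (le_of_lt (lt_of_le_of_lt (le_trans hN₀N₁ hN₀M') hi)))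
            refine ⟨B, hB1, hB2, hB3, ?_⟩
            rintro G hG ⟨Q', hQ', -⟩
            rw [hQ'e] at hQ'
            exact absurd hQ' (Finset.notMem_empty _)
          · have hrklt : ∀ Q' ∈ 𝒬', rk Q' < 𝒬.sup rk := by
              intro Q' hQ'
              simp only [h𝒬'def, Finset.mem_image, Finset.mem_filter, Finset.mem_product] at hQ'
              obtain ⟨⟨m, Q⟩, ⟨⟨hmE, hQ𝒬⟩, hins⟩, rfl⟩ := hQ'
              have hmQ : m ∉ Q := by
                intro hmQ
                have h1 : m ≤ M₀ := hM₀ Q hQ𝒬 m hmQ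
                have h2 : N₀ < m := hEgt m hmE
                omega
              have hrel : r (insert m Q) Q := ⟨⟨h𝒬 Q hQ𝒬, hins⟩, Set.ssubset_insert hmQ⟩
              exact lt_of_lt_of_le (Acc.rank_lt_of_rel (hwf.apply _) hrel) (Finset.le_sup (f := rk) hQ𝒬)
            have hbot : ⊥ < 𝒬.sup rk := by
              obtain ⟨x, hx⟩ := hQ'ne
              exact lt_of_le_of_lt bot_le (hrklt x hx)
            have hμ' : 𝒬'.sup rk < o :=
              lt_of_lt_of_le ((Finset.sup_lt_iff hbot).mpr hrklt) hμ
            exact IH _ hμ' 𝒬' h𝒬'mem le_rfl (δ / 4) (by positivity) s' hs' M'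
        obtain ⟨B, hBgt, hBlo, hBhi, hBbad⟩ := hblock
        have hdisj : Disjoint E B := by
          rw [Finset.disjoint_left]
          intro i hiE hiB
          have h1 : i ≤ E.sup id := Finset.le_sup (f := id) hiE
          have h2 : M' < i := hBgt i hiB
          have h3 : E.sup id ≤ M' := le_max_right _ _
          omega
        have hsum_union : ∑ i ∈ E ∪ B, w i = ∑ i ∈ E, w i + ∑ i ∈ B, w i :=
          Finset.sum_union hdisj
        refine ⟨E ∪ B, ?_, ?_, ?_, ?_⟩
        · intro i hi
          rcases Finset.mem_union.mp hi with h | h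
          · exact hEgt i h
          · exact lt_of_le_of_lt hN₀M' (hBgt i h)
        · rw [hsum_union]; push_cast; linarith
        · rw [hsum_union]; push_cast; linarith
        · rintro F hF hFne ⟨Q, hQ𝒬, hQF⟩
          have hsplitF : ∑ i ∈ F ∩ E, w i + ∑ i ∈ F \ E, w i = ∑ i ∈ F, w i :=
            Finset.sum_inter_add_sum_sdiff F E w
          have hF₂B : F \ E ⊆ B := by
            intro x hx
            obtain ⟨hxF, hxE⟩ := Finset.mem_sdiff.mp hx
            exact (Finset.mem_union.mp (hF hxF)).resolve_left hxE
          rw [hsum_union]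
          rcases (F ∩ E).eq_empty_or_nonempty with hF₁e | hF₁ne
          · have hFB : F ⊆ B := by
              intro x hx
              refine (Finset.mem_union.mp (hF hx)).resolve_left (fun hxE => ?_)
              have : x ∈ F ∩ E := Finset.mem_inter.mpr ⟨hx, hxE⟩
              rw [hF₁e] at this
              exact Finset.notMem_empty x this
            have h1 : ∑ i ∈ F, w i ≤ ∑ i ∈ B, w i :=
              Finset.sum_le_sum_of_subset_of_nonneg hFB (fun i _ _ => hwnonneg i)
            have h2 : (0 : ℝ) ≤ (δ / 4) * (∑ i ∈ E, w i + ∑ i ∈ B, w i) := by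
              have := hσ0 E; have := hσ0 B; positivity
            linarith
          · obtain ⟨m, hm⟩ := hF₁ne
            have hmF : m ∈ F := (Finset.mem_inter.mp hm).1
            have hmE : m ∈ E := (Finset.mem_inter.mp hm).2
            have hQF₁ : Q ∪ ↑(F ∩ E) ∈ 𝓕 := by
              refine hher _ hQF _ ?_
              apply Set.union_subset_union_right
              exact_mod_cast Finset.coe_subset.mpr (Finset.inter_subset_left)
            have h1 : ∑ i ∈ F ∩ E, w i ≤ 2 * s' + (δ / 4) * ∑ i ∈ E, w i :=
              hEQ (F ∩ E) Finset.inter_subset_right ⟨m, hm⟩ ⟨Q, hQ𝒬, hQF₁⟩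
            have hins𝓕 : insert m Q ∈ 𝓕 := by
              refine hher _ hQF _ ?_
              intro x hx
              rcases Set.mem_insert_iff.mp hx with rfl | hx
              · exact Or.inr (by exact_mod_cast hmF)
              · exact Or.inl hx
            have hq2 : insert m Q ∪ ↑(F \ E) ∈ 𝓕 := by
              refine hher _ hQF _ ?_
              intro x hx
              rcases (Set.mem_union _ _ _).mp hx with hx | hx
              · rcases Set.mem_insert_iff.mp hx with rfl | hx
                · exact Or.inr (by exact_mod_cast hmF)
                · exact Or.inl hx
              · refine Or.inr ?_
                have hx' : x ∈ F \ E := by exact_mod_cast hx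
                exact_mod_cast (Finset.mem_sdiff.mp hx').1
            have h2 : ∑ i ∈ F \ E, w i ≤ (δ / 4) * ∑ i ∈ B, w i :=
              hBbad (F \ E) hF₂B ⟨insert m Q, h𝒬'ins m hmE Q hQ𝒬 hins𝓕, hq2⟩
            linarith
    -- conclude CORE from the blocks construction with k = rr
    obtain ⟨E, hEgt, hElo, hEhi, hEQ⟩ := blocks rr
    rw [hr's] at hElo
    have hEhi' : ∑ i ∈ E, w i ≤ 2 * s := by
      have : 2 * (rr : ℝ) * s' = 2 * s := by rw [mul_assoc, hr's]
      linarith [hEhi, this.le, this.ge]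
    refine ⟨E, fun i hi => lt_of_le_of_lt hN₀N (hEgt i hi), hElo, hEhi', ?_⟩
    intro F hF hex
    rcases F.eq_empty_or_nonempty with rfl | hFne
    · simp only [Finset.sum_empty]
      exact mul_nonneg hδ.le (hσ0 E)
    · have h := hEQ F hF hFne hex
      have h2s' : 2 * s' ≤ δ / 2 * s := by
        have h4 : (4 : ℝ) ≤ (rr : ℝ) * δ := by
          rw [div_le_iff₀ hδ] at hr4
          exact hr4
        have h5 : 4 * s' ≤ ((rr : ℝ) * δ) * s' :=
          mul_le_mul_of_nonneg_right h4 hs'.le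
        have h6 : ((rr : ℝ) * δ) * s' = δ * s := by
          rw [← hr's]; ring
        linarith
      have hsσ : δ / 2 * s ≤ δ / 2 * ∑ i ∈ E, w i :=
        mul_le_mul_of_nonneg_left hElo (by positivity)
      have hq : (δ / 4) * ∑ i ∈ E, w i ≤ (δ / 2) * ∑ i ∈ E, w i := by
        have := hσ0 E
        nlinarith
      linarith
  -- apply CORE with 𝒬 = {∅}, δ = ε/2, s = 1 and contradict the filling property
  obtain ⟨E, hEgt, hElo, hEhi, hEbad⟩ :=
    CORE (({∅} : Finset (Set ℕ)).sup rk) {∅} (by simpa using hempty) le_rfl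
      (ε / 2) (by positivity) 1 one_pos 0
  obtain ⟨F, hF𝓕, hFE, hineq⟩ := hfill ↑E E.finite_toSet
  have hFfin : F.Finite := hfin F hF𝓕
  set F' : Finset ℕ := hFfin.toFinset with hF'def
  have hF'E : F' ⊆ E := by
    intro x hx
    have hxF : x ∈ F := hFfin.mem_toFinset.mp hx
    exact_mod_cast hFE hxF
  have hqual : ∃ Q ∈ ({∅} : Finset (Set ℕ)), Q ∪ ↑F' ∈ 𝓕 := by
    refine ⟨∅, Finset.mem_singleton_self _, ?_⟩
    rw [Set.empty_union, hF'def, hFfin.coe_toFinset]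
    exact hF𝓕
  have hbad := hEbad F' hF'E hqual
  have hE_tsum : ∑' i : (↑E : Set ℕ), w i = ∑ i ∈ E, w i := E.tsum_subtype' w
  have hF_tsum : ∑' i : F, w i = ∑ i ∈ F', w i := by
    conv_lhs => rw [← hFfin.coe_toFinset]
    exact F'.tsum_subtype' w
  rw [hE_tsum, hF_tsum] at hineq
  nlinarith [hbad, hineq, hElo, hε]
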